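/- For d ≥ 1, the address function f on m = 2(d−1) + 2^{d−1} Boolean variables, whose input is written as (x₁,…,x_{d−1}, y) with each x_i ∈ {−1,1}² and y ∈ {−1,1}^{2^{d−1}} indexed by a ∈ {−1,1}^{d−1}, defined by f(x,y) = Σ_{a ∈ {−1,1}^{d−1}} (∏_{i=1}^{d−1} (x_i(1) − a_i x_i(2))/2) · y(a), takes values in {−1,1}, has degree exactly d, and satisfies (Σ_{S ⊆ [m]} |f̂(S)|^{2d/(d+1)})^{(d+1)/(2d)} = 2^{(d−1)/d}. -/
import Mathlib


noncomputable section

/-- The sign `±1` encoded by a Boolean: `false ↦ +1`, `true ↦ -1`. -/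
def sgnR (a : Bool) : ℝ := if a then -1 else 1

/-- The Fourier coefficient `f̂(S)` of a real-valued function on the Boolean cube `{−1,1}^ι`
(encoded as `ι → Bool`, `false ↦ +1`, `true ↦ −1`). -/
def boolFourierCoeff {ι : Type*} [Fintype ι] [DecidableEq ι] (f : (ι → Bool) → ℝ)
    (S : Finset ι) : ℝ :=
  ((2 : ℝ) ^ Fintype.card ι)⁻¹ * ∑ x : ι → Bool, f x * ∏ i ∈ S, sgnR (x i)

end



open Finset

noncomputable section

lemma sgnR_sq (b : Bool) : sgnR b * sgnR b = 1 := by cases b <;> simp [sgnR]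

lemma sum_chi {ι : Type*} [Fintype ι] [DecidableEq ι] (A : Finset ι) :
    ∑ x : ι → Bool, ∏ i ∈ A, sgnR (x i) =
      if A = ∅ then (2:ℝ) ^ Fintype.card ι else 0 := by
  calc ∑ x : ι → Bool, ∏ i ∈ A, sgnR (x i)
      = ∑ x : ι → Bool, ∏ i : ι, (if i ∈ A then sgnR (x i) else 1) := by
        refine Finset.sum_congr rfl (fun x _ => ?_)
        rw [Finset.prod_ite_mem, Finset.univ_inter]
    _ = ∏ i : ι, ∑ b : Bool, (if i ∈ A then sgnR b else 1) :=
        (Fintype.prod_sum (fun i b => if i ∈ A then sgnR b else 1)).symm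
    _ = ∏ i : ι, (if i ∈ A then (0:ℝ) else 2) := by
        refine Finset.prod_congr rfl (fun i _ => ?_)
        by_cases h : i ∈ A <;> simp [h, sgnR]
    _ = if A = ∅ then (2:ℝ) ^ Fintype.card ι else 0 := by
        by_cases h : A = ∅
        · simp [h, Finset.prod_const, Finset.card_univ]
        · obtain ⟨i, hi⟩ := Finset.nonempty_iff_ne_empty.2 h
          rw [if_neg h]
          exact Finset.prod_eq_zero (Finset.mem_univ i) (by simp [hi])

lemma orth_chi {ι : Type*} [Fintype ι] [DecidableEq ι] (A B : Finset ι) :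
    ∑ x : ι → Bool, (∏ i ∈ A, sgnR (x i)) * ∏ i ∈ B, sgnR (x i) =
      if A = B then (2:ℝ) ^ Fintype.card ι else 0 := by
  have key : ∀ x : ι → Bool, (∏ i ∈ A, sgnR (x i)) * ∏ i ∈ B, sgnR (x i)
      = ∏ i ∈ (A \ B) ∪ (B \ A), sgnR (x i) := by
    intro x
    have h1 : ∏ i ∈ A, sgnR (x i) = (∏ i ∈ A \ B, sgnR (x i)) * ∏ i ∈ A ∩ B, sgnR (x i) := by
      rw [← Finset.prod_union (Finset.disjoint_sdiff_inter A B), Finset.sdiff_union_inter]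
    have h2 : ∏ i ∈ B, sgnR (x i) = (∏ i ∈ B \ A, sgnR (x i)) * ∏ i ∈ A ∩ B, sgnR (x i) := by
      rw [Finset.inter_comm, ← Finset.prod_union (Finset.disjoint_sdiff_inter B A),
        Finset.sdiff_union_inter]
    have h3 : (∏ i ∈ A ∩ B, sgnR (x i)) * ∏ i ∈ A ∩ B, sgnR (x i) = 1 := by
      rw [← Finset.prod_mul_distrib]; exact Finset.prod_eq_one (fun i _ => sgnR_sq (x i))
    rw [h1, h2, Finset.prod_union disjoint_sdiff_sdiff]
    calc (((∏ i ∈ A \ B, sgnR (x i)) * ∏ i ∈ A ∩ B, sgnR (x i)) *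
          ((∏ i ∈ B \ A, sgnR (x i)) * ∏ i ∈ A ∩ B, sgnR (x i)))
        = ((∏ i ∈ A \ B, sgnR (x i)) * ∏ i ∈ B \ A, sgnR (x i)) *
          ((∏ i ∈ A ∩ B, sgnR (x i)) * ∏ i ∈ A ∩ B, sgnR (x i)) := by ring
      _ = (∏ i ∈ A \ B, sgnR (x i)) * ∏ i ∈ B \ A, sgnR (x i) := by rw [h3, mul_one]
  rw [Finset.sum_congr rfl (fun x _ => key x), sum_chi]
  congr 1
  simp only [Finset.union_eq_empty, Finset.sdiff_eq_empty_iff_subset, eq_iff_iff]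
  constructor
  · rintro ⟨hx, hy⟩; exact Finset.Subset.antisymm hx hy
  · rintro rfl; exact ⟨le_rfl, le_rfl⟩

def addrSet (n : ℕ) (T : Finset (Fin n)) (a : Fin n → Bool) :
    Finset ((Fin n × Fin 2) ⊕ (Fin n → Bool)) :=
  insert (Sum.inr a) (Finset.univ.image fun i => Sum.inl (i, if i ∈ T then 0 else 1))

lemma addr_inj (n : ℕ) (T : Finset (Fin n)) :
    Function.Injective (fun i : Fin n =>
      (Sum.inl (i, if i ∈ T then 0 else 1) : (Fin n × Fin 2) ⊕ (Fin n → Bool))) := by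
  intro i j h
  simpa using congrArg (fun s => Sum.elim (fun p => p.1) (fun _ => i) s) h

lemma inr_notMem_image (n : ℕ) (T : Finset (Fin n)) (a : Fin n → Bool) :
    (Sum.inr a : (Fin n × Fin 2) ⊕ (Fin n → Bool)) ∉
      Finset.univ.image (fun i : Fin n => (Sum.inl (i, if i ∈ T then 0 else 1) :
        (Fin n × Fin 2) ⊕ (Fin n → Bool))) := by
  simp

lemma addrSet_card (n : ℕ) (T : Finset (Fin n)) (a : Fin n → Bool) :
    (addrSet n T a).card = n + 1 := by
  rw [addrSet, Finset.card_insert_of_notMem (inr_notMem_image n T a),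
    Finset.card_image_of_injective _ (addr_inj n T), Finset.card_univ, Fintype.card_fin]

lemma addrSet_injective (n : ℕ) :
    Function.Injective (fun p : Finset (Fin n) × (Fin n → Bool) => addrSet n p.1 p.2) := by
  rintro ⟨T, a⟩ ⟨T', a'⟩ h
  simp only [addrSet] at h
  have ha : a = a' := by
    have h1 : (Sum.inr a : (Fin n × Fin 2) ⊕ (Fin n → Bool)) ∈
        insert (Sum.inr a') (Finset.univ.image fun i : Fin n =>
          (Sum.inl (i, if i ∈ T' then 0 else 1) : (Fin n × Fin 2) ⊕ (Fin n → Bool))) := by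
      rw [← h]; exact Finset.mem_insert_self _ _
    rcases Finset.mem_insert.1 h1 with h2 | h2
    · exact Sum.inr_injective h2
    · exact absurd h2 (by simp)
  have hT : T = T' := by
    ext i
    have key : ∀ (U : Finset (Fin n)) (b : Fin n → Bool),
        (i ∈ U ↔ (Sum.inl (i, 0) : (Fin n × Fin 2) ⊕ (Fin n → Bool)) ∈ addrSet n U b) := by
      intro U b
      constructor
      · intro hi
        refine Finset.mem_insert_of_mem (Finset.mem_image.2 ⟨i, Finset.mem_univ i, ?_⟩)
        simp [hi]
      · intro hi
        rcases Finset.mem_insert.1 hi with h2 | h2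
        · exact absurd h2 (by simp)
        · obtain ⟨j, _, hj⟩ := Finset.mem_image.1 h2
          have hji : j = i := by
            simpa using congrArg (fun s => Sum.elim (fun p => p.1) (fun _ => j) s) hj
          subst hji
          by_contra hnot
          rw [if_neg hnot] at hj
          have : (1 : Fin 2) = 0 := by
            simpa using congrArg (fun s => Sum.elim (fun p => p.2) (fun _ => (1:Fin 2)) s) hj
          exact absurd this (by decide)
    rw [key T a, key T' a']
    show _ ∈ addrSet n T a ↔ _
    rw [addrSet, h]; rfl
  exact Prod.ext hT ha

lemma chi_addrSet (n : ℕ) (T : Finset (Fin n)) (a : Fin n → Bool)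
    (z : (Fin n × Fin 2) ⊕ (Fin n → Bool) → Bool) :
    ∏ j ∈ addrSet n T a, sgnR (z j) =
      ((∏ i ∈ T, sgnR (z (Sum.inl (i, 0)))) * ∏ i ∈ Tᶜ, sgnR (z (Sum.inl (i, 1)))) *
        sgnR (z (Sum.inr a)) := by
  rw [addrSet, Finset.prod_insert (inr_notMem_image n T a),
    Finset.prod_image (fun i _ j _ h => addr_inj n T h), mul_comm]
  congr 1
  calc ∏ i : Fin n, sgnR (z (Sum.inl (i, if i ∈ T then 0 else 1)))
      = (∏ i ∈ T, sgnR (z (Sum.inl (i, if i ∈ T then 0 else 1)))) *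
        ∏ i ∈ Tᶜ, sgnR (z (Sum.inl (i, if i ∈ T then 0 else 1))) := by
        rw [← Finset.prod_union (disjoint_compl_right : Disjoint T Tᶜ), Finset.union_compl]
    _ = (∏ i ∈ T, sgnR (z (Sum.inl (i, 0)))) * ∏ i ∈ Tᶜ, sgnR (z (Sum.inl (i, 1))) := by
        congr 1
        · exact Finset.prod_congr rfl (fun i hi => by rw [if_pos hi])
        · exact Finset.prod_congr rfl (fun i hi => by rw [if_neg (Finset.mem_compl.1 hi)])
end

noncomputable section
def addrCoef (n : ℕ) (T : Finset (Fin n)) (a : Fin n → Bool) : ℝ :=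
  (∏ i ∈ Tᶜ, (-sgnR (a i))) / 2 ^ n


lemma addr_expand (n : ℕ) (z : (Fin n × Fin 2) ⊕ (Fin n → Bool) → Bool) :
    ∑ a : Fin n → Bool, (∏ i : Fin n,
        (sgnR (z (Sum.inl (i, 0))) - sgnR (a i) * sgnR (z (Sum.inl (i, 1)))) / 2) *
        sgnR (z (Sum.inr a))
    = ∑ p : Finset (Fin n) × (Fin n → Bool),
        addrCoef n p.1 p.2 * ∏ j ∈ addrSet n p.1 p.2, sgnR (z j) := by
  rw [Fintype.sum_prod_type, Finset.sum_comm]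
  refine Finset.sum_congr rfl (fun a _ => ?_)
  have hprod : ∏ i : Fin n,
      (sgnR (z (Sum.inl (i, 0))) - sgnR (a i) * sgnR (z (Sum.inl (i, 1)))) / 2
      = ∑ T : Finset (Fin n), addrCoef n T a *
          ((∏ i ∈ T, sgnR (z (Sum.inl (i, 0)))) * ∏ i ∈ Tᶜ, sgnR (z (Sum.inl (i, 1)))) := by
    rw [Finset.prod_div_distrib, Finset.prod_const, Finset.card_univ, Fintype.card_fin]
    have hadd : ∏ i : Fin n, (sgnR (z (Sum.inl (i, 0))) - sgnR (a i) * sgnR (z (Sum.inl (i, 1))))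
        = ∑ T : Finset (Fin n), (∏ i ∈ T, sgnR (z (Sum.inl (i, 0)))) *
            ∏ i ∈ Tᶜ, (-(sgnR (a i) * sgnR (z (Sum.inl (i, 1))))) := by
      simp only [sub_eq_add_neg]
      exact Fintype.prod_add _ _
    rw [hadd, Finset.sum_div]
    refine Finset.sum_congr rfl (fun T _ => ?_)
    have hsplit : ∏ i ∈ Tᶜ, (-(sgnR (a i) * sgnR (z (Sum.inl (i, 1)))))
        = (∏ i ∈ Tᶜ, (-sgnR (a i))) * ∏ i ∈ Tᶜ, sgnR (z (Sum.inl (i, 1))) := by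
      rw [← Finset.prod_mul_distrib]; exact Finset.prod_congr rfl (fun i _ => by ring)
    rw [hsplit, addrCoef]; ring
  rw [hprod, Finset.sum_mul]
  refine Finset.sum_congr rfl (fun T _ => ?_)
  rw [chi_addrSet]; ring

lemma fourier_core (n : ℕ) (f : ((Fin n × Fin 2) ⊕ (Fin n → Bool) → Bool) → ℝ)
    (hf2 : ∀ z, f z = ∑ p : Finset (Fin n) × (Fin n → Bool),
        addrCoef n p.1 p.2 * ∏ j ∈ addrSet n p.1 p.2, sgnR (z j))
    (S : Finset ((Fin n × Fin 2) ⊕ (Fin n → Bool))) :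
    boolFourierCoeff f S = ∑ p : Finset (Fin n) × (Fin n → Bool),
      addrCoef n p.1 p.2 * (if addrSet n p.1 p.2 = S then 1 else 0) := by
  classical
  set M := Fintype.card ((Fin n × Fin 2) ⊕ (Fin n → Bool)) with hM
  have h2M : (2:ℝ) ^ M ≠ 0 := by positivity
  unfold boolFourierCoeff
  have step1 : ∀ x : (Fin n × Fin 2) ⊕ (Fin n → Bool) → Bool,
      f x * ∏ i ∈ S, sgnR (x i) = ∑ p : Finset (Fin n) × (Fin n → Bool),
        addrCoef n p.1 p.2 * ((∏ j ∈ addrSet n p.1 p.2, sgnR (x j)) * ∏ i ∈ S, sgnR (x i)) := by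
    intro x
    rw [hf2 x, Finset.sum_mul]
    exact Finset.sum_congr rfl (fun p _ => by ring)
  rw [Finset.sum_congr rfl (fun x _ => step1 x), Finset.sum_comm, Finset.mul_sum]
  refine Finset.sum_congr rfl (fun p _ => ?_)
  rw [← Finset.mul_sum, orth_chi]
  split
  · rw [mul_one]; field_simp
  · simp

lemma fourier_addr_eq (n : ℕ) (f : ((Fin n × Fin 2) ⊕ (Fin n → Bool) → Bool) → ℝ)
    (hf2 : ∀ z, f z = ∑ p : Finset (Fin n) × (Fin n → Bool),
        addrCoef n p.1 p.2 * ∏ j ∈ addrSet n p.1 p.2, sgnR (z j))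
    (T : Finset (Fin n)) (a : Fin n → Bool) :
    boolFourierCoeff f (addrSet n T a) = addrCoef n T a := by
  rw [fourier_core n f hf2]
  rw [Finset.sum_eq_single (T, a)]
  · simp
  · rintro ⟨T', a'⟩ _ hne
    rw [if_neg, mul_zero]
    exact fun h => hne (addrSet_injective n h)
  · intro h; exact absurd (Finset.mem_univ _) h

lemma fourier_addr_zero (n : ℕ) (f : ((Fin n × Fin 2) ⊕ (Fin n → Bool) → Bool) → ℝ)
    (hf2 : ∀ z, f z = ∑ p : Finset (Fin n) × (Fin n → Bool),
        addrCoef n p.1 p.2 * ∏ j ∈ addrSet n p.1 p.2, sgnR (z j))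
    (S : Finset ((Fin n × Fin 2) ⊕ (Fin n → Bool)))
    (hS : ∀ T a, addrSet n T a ≠ S) :
    boolFourierCoeff f S = 0 := by
  rw [fourier_core n f hf2]
  refine Finset.sum_eq_zero (fun p _ => ?_)
  rw [if_neg (hS p.1 p.2), mul_zero]

lemma abs_addrCoef (n : ℕ) (T : Finset (Fin n)) (a : Fin n → Bool) :
    |addrCoef n T a| = ((2:ℝ) ^ n)⁻¹ := by
  rw [addrCoef, abs_div, Finset.abs_prod]
  have : ∀ i ∈ Tᶜ, |(-sgnR (a i))| = 1 := by
    intro i _; cases a i <;> simp [sgnR]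
  rw [Finset.prod_congr rfl this, Finset.prod_const_one, abs_pow]
  norm_num [one_div]
end

lemma prod_sgnR {α : Type*} [DecidableEq α] (s : Finset α) (g : α → Bool) :
    (∏ i ∈ s, sgnR (g i)) = 1 ∨ (∏ i ∈ s, sgnR (g i)) = -1 := by
  induction s using Finset.induction_on with
  | empty => left; simp
  | @insert a s ha ih =>
    rw [Finset.prod_insert ha]
    rcases ih with h1 | h1 <;> rw [h1] <;> cases hg : g a <;> simp [sgnR]

lemma addr_values (n : ℕ) (z : (Fin n × Fin 2) ⊕ (Fin n → Bool) → Bool) :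
    (∑ a : Fin n → Bool, (∏ i : Fin n,
        (sgnR (z (Sum.inl (i, 0))) - sgnR (a i) * sgnR (z (Sum.inl (i, 1)))) / 2) *
        sgnR (z (Sum.inr a))) = 1 ∨
    (∑ a : Fin n → Bool, (∏ i : Fin n,
        (sgnR (z (Sum.inl (i, 0))) - sgnR (a i) * sgnR (z (Sum.inl (i, 1)))) / 2) *
        sgnR (z (Sum.inr a))) = -1 := by
  classical
  set a₀ : Fin n → Bool := fun i => z (Sum.inl (i, 0)) == z (Sum.inl (i, 1)) with ha₀
  have hsum : (∑ a : Fin n → Bool, (∏ i : Fin n,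
        (sgnR (z (Sum.inl (i, 0))) - sgnR (a i) * sgnR (z (Sum.inl (i, 1)))) / 2) *
        sgnR (z (Sum.inr a)))
      = (∏ i : Fin n, sgnR (z (Sum.inl (i, 0)))) * sgnR (z (Sum.inr a₀)) := by
    rw [Finset.sum_eq_single a₀]
    · congr 1
      refine Finset.prod_congr rfl (fun i _ => ?_)
      cases h0 : z (Sum.inl (i, 0)) <;> cases h1 : z (Sum.inl (i, 1)) <;>
        simp [ha₀, h0, h1, sgnR] <;> norm_num
    · intro a _ hne
      have : ∃ i, a i ≠ a₀ i := by
        by_contra hc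
        push_neg at hc
        exact hne (funext hc)
      obtain ⟨i, hi⟩ := this
      rw [Finset.prod_eq_zero (Finset.mem_univ i), zero_mul]
      cases h0 : z (Sum.inl (i, 0)) <;> cases h1 : z (Sum.inl (i, 1)) <;>
        cases hai : a i <;>
        simp only [ha₀, h0, h1, hai] at hi <;>
        first
          | exact absurd rfl hi
          | simp [sgnR, h0, h1, hai]
    · intro h; exact absurd (Finset.mem_univ _) h
  rw [hsum]
  rcases prod_sgnR Finset.univ (fun i => z (Sum.inl (i, 0))) with h1 | h1 <;>
    rw [h1] <;> cases hz : z (Sum.inr a₀) <;> simp [hz, sgnR]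


/-- **The address function saturates the Boolean Bohnenblust–Hille inequality.**
For `d ≥ 1`, the address function on `m = 2(d−1) + 2^{d−1}` Boolean variables (the input being
`(x₁,…,x_{d−1}, y)` with `x_i ∈ {−1,1}²` and `y ∈ {−1,1}^{2^{d−1}}` indexed by
`a ∈ {−1,1}^{d−1}`), defined by
`f(x,y) = ∑_a (∏_i (x_i(1) − a_i x_i(2))/2) · y(a)`,
takes values in `{−1,1}`, has degree exactly `d`, and satisfies
`(∑_S |f̂(S)|^{2d/(d+1)})^{(d+1)/(2d)} = 2^{(d−1)/d}`. -/
theorem address_function_saturates_bh {d : ℕ} (hd : 1 ≤ d)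
    (f : ((Fin (d - 1) × Fin 2) ⊕ (Fin (d - 1) → Bool) → Bool) → ℝ)
    (hf : ∀ z, f z =
      ∑ a : Fin (d - 1) → Bool,
        (∏ i : Fin (d - 1),
          (sgnR (z (Sum.inl (i, 0))) - sgnR (a i) * sgnR (z (Sum.inl (i, 1)))) / 2) *
          sgnR (z (Sum.inr a))) :
    (∀ z, f z = 1 ∨ f z = -1) ∧
    (∀ S : Finset ((Fin (d - 1) × Fin 2) ⊕ (Fin (d - 1) → Bool)),
      d < S.card → boolFourierCoeff f S = 0) ∧
    (∃ S : Finset ((Fin (d - 1) × Fin 2) ⊕ (Fin (d - 1) → Bool)),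
      S.card = d ∧ boolFourierCoeff f S ≠ 0) ∧
    (∑ S : Finset ((Fin (d - 1) × Fin 2) ⊕ (Fin (d - 1) → Bool)),
        |boolFourierCoeff f S| ^ ((2 * (d : ℝ)) / ((d : ℝ) + 1))) ^
          (((d : ℝ) + 1) / (2 * (d : ℝ))) = (2 : ℝ) ^ (((d : ℝ) - 1) / (d : ℝ)) := by
  classical
  have hf2 : ∀ z, f z = ∑ p : Finset (Fin (d - 1)) × (Fin (d - 1) → Bool),
      addrCoef (d - 1) p.1 p.2 * ∏ j ∈ addrSet (d - 1) p.1 p.2, sgnR (z j) :=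
    fun z => (hf z).trans (addr_expand (d - 1) z)
  refine ⟨?_, ?_, ?_, ?_⟩
  · intro z; rw [hf z]; exact addr_values (d - 1) z
  · intro S hS
    refine fourier_addr_zero (d - 1) f hf2 S (fun T a h => ?_)
    have hc := addrSet_card (d - 1) T a
    rw [h] at hc
    omega
  · refine ⟨addrSet (d - 1) Finset.univ (fun _ => false), ?_, ?_⟩
    · rw [addrSet_card]; omega
    · rw [fourier_addr_eq (d - 1) f hf2, addrCoef]
      simp [Finset.compl_univ]
  · have hdR : (1:ℝ) ≤ (d:ℝ) := by exact_mod_cast hd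
    have hd0 : (0:ℝ) < (d:ℝ) := by linarith
    have hd1 : (0:ℝ) < (d:ℝ) + 1 := by linarith
    set P : ℝ := 2 * (d:ℝ) / ((d:ℝ) + 1) with hP
    have hPne : P ≠ 0 := ne_of_gt (div_pos (by linarith) hd1)
    set Φ : Finset (Fin (d - 1)) × (Fin (d - 1) → Bool) →
        Finset ((Fin (d - 1) × Fin 2) ⊕ (Fin (d - 1) → Bool)) :=
      fun p => addrSet (d - 1) p.1 p.2 with hΦ
    set I : Finset (Finset ((Fin (d - 1) × Fin 2) ⊕ (Fin (d - 1) → Bool))) :=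
      Finset.image Φ Finset.univ with hI
    have hzero : ∀ S ∈ (Finset.univ :
          Finset (Finset ((Fin (d - 1) × Fin 2) ⊕ (Fin (d - 1) → Bool)))),
        S ∉ I → |boolFourierCoeff f S| ^ P = 0 := by
      intro S _ hS
      have h0 : boolFourierCoeff f S = 0 := by
        refine fourier_addr_zero (d - 1) f hf2 S (fun T a h => hS ?_)
        exact Finset.mem_image.2 ⟨(T, a), Finset.mem_univ _, h⟩
      rw [h0, abs_zero, Real.zero_rpow hPne]
    rw [← Finset.sum_subset (Finset.subset_univ I) hzero, hI,
      Finset.sum_image (fun x _ y _ h => addrSet_injective (d - 1) h)]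
    have hval : ∀ pr : Finset (Fin (d - 1)) × (Fin (d - 1) → Bool),
        |boolFourierCoeff f (Φ pr)| ^ P = (((2:ℝ) ^ (d - 1))⁻¹) ^ P := by
      intro pr
      rw [hΦ]
      exact congrArg (· ^ P) ((congrArg abs (fourier_addr_eq (d - 1) f hf2 pr.1 pr.2)).trans
        (abs_addrCoef (d - 1) pr.1 pr.2))
    rw [Finset.sum_congr rfl (fun pr _ => hval pr), Finset.sum_const, Finset.card_univ,
      Fintype.card_prod, Fintype.card_finset, Fintype.card_fin, Fintype.card_fun,
      Fintype.card_bool, Fintype.card_fin, nsmul_eq_mul]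
    have hnR : ((d - 1 : ℕ):ℝ) = (d:ℝ) - 1 := by
      push_cast [Nat.cast_sub hd]
      ring
    have h2pos : (0:ℝ) < 2 := by norm_num
    have hcast : ((2 ^ (d - 1) * 2 ^ (d - 1) : ℕ) : ℝ)
        = (2:ℝ) ^ (2 * ((d - 1 : ℕ):ℝ)) := by
      push_cast
      rw [← Real.rpow_natCast 2 (d - 1), ← Real.rpow_add h2pos]
      ring_nf
    have hinv : (((2:ℝ) ^ (d - 1))⁻¹) ^ P = (2:ℝ) ^ (-((d - 1 : ℕ):ℝ) * P) := by
      rw [← Real.rpow_natCast 2 (d - 1), ← Real.rpow_neg (le_of_lt h2pos),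
        ← Real.rpow_mul (le_of_lt h2pos)]
    rw [hcast, hinv, ← Real.rpow_add h2pos, ← Real.rpow_mul (le_of_lt h2pos)]
    congr 1
    rw [hnR, hP]
    field_simp
    ring
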